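/- arXiv:1806.00949 — 3 statements merged into one kernel-verified Lean document; each statement's English description precedes it below -/
import Mathlib

section
/- For all integers $m \geq 1$ and $n \geq 1$, if $\log^{(m)}(n) \leq 2^{c m^2 \log m}$ for a constant $c > 0$, then $\log^*(n) \leq \log^*(m) + m + O(1)$; consequently $m \geq \Omega(\log^* n)$. -/
/-- The iterated logarithm: `iterLog 0 x = log₂ x`, `iterLog i x = 1 + iterLog (i-1) (log₂ x)`. -/
noncomputable def iterLog : ℕ → ℝ → ℝ
  | 0, x => Real.logb 2 x
  | (i + 1), x => 1 + iterLog i (Real.logb 2 x)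

/-- `log* x`: the number of times `log₂` must be iterated before the result is `≤ 1`.
It satisfies `logStar x = 0` for `x ≤ 1` and `logStar x = 1 + logStar (log₂ x)` for `x > 1`. -/
noncomputable def logStar (x : ℝ) : ℕ :=
  sInf {k | (fun y => Real.logb 2 y)^[k] x ≤ 1}

/-!
Writing `log₂^[k]` for the `k`-fold iterate of `log₂`, one has `iterLog m n = m + log₂^[m+1] n`,
so the hypothesis says that `m + 1` applications of `log₂` bring `n` below `2 ^ t` with
`t = c m² log₂ m`. Hence `log* n ≤ m + 1 + log* (2 ^ t) ≤ m + 2 + log* t`, and since `t ≤ 2 ^ 2 ^ m`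
for all large `m`, `log* t ≤ log* m + 2` apart from finitely many `m`, which only change the constant.
With `log* m ≤ m` this also gives `m ≥ (log* n - C) / 2`.
-/

open Filter

theorem exists_iterate_logb_le_one_of_le {x y : ℝ} (hxy : x ≤ y) {k : ℕ}
    (hy : (Real.logb 2)^[k] y ≤ 1) : ∃ j ≤ k, (Real.logb 2)^[j] x ≤ 1 := by
  induction k generalizing x y with
  | zero => exact ⟨0, le_rfl, hxy.trans hy⟩
  | succ k ih =>
    rcases le_or_gt x 1 with hx | hx
    · exact ⟨0, Nat.zero_le _, hx⟩
    -- `logb 2` is monotone only on positive reals, hence the escape at `x ≤ 1`.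
    have hlog : Real.logb 2 x ≤ Real.logb 2 y :=
      Real.logb_le_logb_of_le one_lt_two (by linarith) hxy
    obtain ⟨j, hjk, hj⟩ := ih hlog hy
    exact ⟨j + 1, Nat.succ_le_succ hjk, hj⟩

theorem exists_iterate_logb_le_one_of_le_two_pow {y : ℝ} {p : ℕ} (hy : y ≤ 2 ^ p) :
    ∃ j ≤ p, (Real.logb 2)^[j] y ≤ 1 := by
  induction p generalizing y with
  | zero => exact ⟨0, le_rfl, by simpa using hy⟩
  | succ p ih =>
    rcases le_or_gt y 1 with hy1 | hy1
    · exact ⟨0, Nat.zero_le _, hy1⟩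
    have hlog : Real.logb 2 y ≤ 2 ^ p :=
      calc Real.logb 2 y ≤ ((p + 1 : ℕ) : ℝ) := by
            rwa [Real.logb_le_iff_le_rpow one_lt_two (by linarith), Real.rpow_natCast]
        _ ≤ 2 ^ p := by exact_mod_cast Nat.lt_two_pow_self
    obtain ⟨j, hjp, hj⟩ := ih hlog
    exact ⟨j + 1, Nat.succ_le_succ hjp, hj⟩

theorem logStar_le_of_iterate_logb_le_one {x : ℝ} {k : ℕ} (h : (Real.logb 2)^[k] x ≤ 1) :
    logStar x ≤ k :=
  Nat.sInf_le h

theorem iterate_logb_logStar_le_one (x : ℝ) : (Real.logb 2)^[logStar x] x ≤ 1 := by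
  obtain ⟨p, hp⟩ := exists_nat_ge x
  obtain ⟨j, -, hj⟩ := exists_iterate_logb_le_one_of_le_two_pow
    (hp.trans (by exact_mod_cast Nat.lt_two_pow_self.le : (p : ℝ) ≤ 2 ^ p))
  exact Nat.sInf_mem (s := {k | (Real.logb 2)^[k] x ≤ 1}) ⟨j, hj⟩

theorem logStar_le_of_le_two_pow {y : ℝ} {p : ℕ} (hy : y ≤ 2 ^ p) : logStar y ≤ p := by
  obtain ⟨j, hjp, hj⟩ := exists_iterate_logb_le_one_of_le_two_pow hy
  exact (logStar_le_of_iterate_logb_le_one hj).trans hjp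

theorem logStar_natCast_le (m : ℕ) : logStar m ≤ m :=
  logStar_le_of_le_two_pow (by exact_mod_cast Nat.lt_two_pow_self.le)

theorem logStar_le_add_of_iterate_logb_le {x y : ℝ} {k : ℕ} (h : (Real.logb 2)^[k] x ≤ y) :
    logStar x ≤ k + logStar y := by
  obtain ⟨j, hj, hjy⟩ := exists_iterate_logb_le_one_of_le h (iterate_logb_logStar_le_one y)
  have : (Real.logb 2)^[j + k] x ≤ 1 := by rwa [Function.iterate_add_apply]
  linarith [logStar_le_of_iterate_logb_le_one this]

theorem logStar_mono : Monotone logStar := fun x y hxy =>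
  by simpa using logStar_le_add_of_iterate_logb_le (k := 0) hxy

theorem logStar_two_rpow_le (t : ℝ) : logStar ((2 : ℝ) ^ t) ≤ logStar t + 1 := by
  have h : (Real.logb 2)^[1] ((2 : ℝ) ^ t) ≤ t := by
    simp [Real.logb_rpow]
  linarith [logStar_le_add_of_iterate_logb_le h]

theorem logStar_le_of_le_two_pow_two_pow {x : ℝ} {m : ℕ} (h : x ≤ 2 ^ 2 ^ m) :
    logStar x ≤ logStar m + 2 := by
  have hpow (k : ℕ) : logStar ((2 : ℝ) ^ k) ≤ logStar k + 1 := by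
    simpa using logStar_two_rpow_le k
  calc logStar x ≤ logStar ((2 : ℝ) ^ 2 ^ m) := logStar_mono h
    _ ≤ logStar ((2 ^ m : ℕ) : ℝ) + 1 := hpow _
    _ ≤ logStar m + 2 := by push_cast; linarith [hpow m]

theorem exists_logStar_le_add_of_eventually_le_two_pow_two_pow {f : ℕ → ℝ}
    (hf : ∀ᶠ m in atTop, f m ≤ 2 ^ 2 ^ m) : ∃ D : ℕ, ∀ m, logStar (f m) ≤ logStar m + D := by
  obtain ⟨N, hN⟩ := eventually_atTop.1 hf
  refine ⟨(Finset.range N).sup (fun m => logStar (f m)) + 2, fun m => ?_⟩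
  rcases lt_or_ge m N with hm | hm
  · have := Finset.le_sup (f := fun m => logStar (f m)) (Finset.mem_range.2 hm)
    omega
  · have := logStar_le_of_le_two_pow_two_pow (hN m hm)
    omega

theorem iterLog_eq_add_iterate_logb (m : ℕ) (x : ℝ) :
    iterLog m x = m + (Real.logb 2)^[m + 1] x := by
  induction m generalizing x with
  | zero => simp [iterLog]
  | succ m ih =>
    rw [iterLog, ih, Function.iterate_succ_apply _ (m + 1)]
    push_cast
    ring

theorem logb_two_natCast_le (m : ℕ) : Real.logb 2 m ≤ m := by
  rcases Nat.eq_zero_or_pos m with rfl | hm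
  · simp
  rw [Real.logb_le_iff_le_rpow one_lt_two (by exact_mod_cast hm), Real.rpow_natCast]
  exact_mod_cast Nat.lt_two_pow_self.le

theorem eventually_mul_sq_mul_logb_le_two_pow_two_pow (c : ℝ) :
    ∀ᶠ m : ℕ in atTop, c * (m : ℝ) ^ 2 * Real.logb 2 m ≤ 2 ^ 2 ^ m := by
  have hpoly : ∀ᶠ m : ℕ in atTop, |c| * (m : ℝ) ^ 3 ≤ 2 ^ m := by
    filter_upwards [((isLittleO_pow_const_const_pow_of_one_lt (R := ℝ) 3 one_lt_two).const_mul_left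
      |c|).bound one_pos] with m hm
    simpa [abs_mul] using hm
  filter_upwards [hpoly, eventually_ge_atTop 1] with m hm hm1
  have hlog : 0 ≤ Real.logb 2 m := Real.logb_nonneg one_lt_two (by exact_mod_cast hm1)
  calc c * (m : ℝ) ^ 2 * Real.logb 2 m ≤ |c| * ((m : ℝ) ^ 2 * m) := by
        rw [mul_assoc]
        exact mul_le_mul (le_abs_self c)
          (mul_le_mul_of_nonneg_left (logb_two_natCast_le m) (by positivity))
          (by positivity) (abs_nonneg c)
    _ = |c| * (m : ℝ) ^ 3 := by ring
    _ ≤ 2 ^ m := hm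
    _ ≤ 2 ^ 2 ^ m := pow_le_pow_right₀ one_le_two Nat.lt_two_pow_self.le

theorem logstar_from_iterated_log_bound_general (c : ℝ) :
    ∃ C : ℝ, ∃ a : ℝ, 0 < a ∧
      ∀ m n : ℕ, 1 ≤ m → 1 ≤ n →
        iterLog m (n : ℝ) ≤ (2 : ℝ) ^ (c * (m : ℝ) ^ 2 * Real.logb 2 m) →
        ((logStar n : ℝ) ≤ (logStar m : ℝ) + m + C ∧
          a * (logStar n : ℝ) - C ≤ (m : ℝ)) := by
  obtain ⟨D, hD⟩ := exists_logStar_le_add_of_eventually_le_two_pow_two_pow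
    (eventually_mul_sq_mul_logb_le_two_pow_two_pow c)
  refine ⟨D + 2, 1 / 2, one_half_pos, fun m n _ _ h => ?_⟩
  set t := c * (m : ℝ) ^ 2 * Real.logb 2 m
  have hiter : (Real.logb 2)^[m + 1] (n : ℝ) ≤ 2 ^ t := by
    rw [iterLog_eq_add_iterate_logb] at h
    linarith [(Nat.cast_nonneg m : (0 : ℝ) ≤ m)]
  have hn : logStar (n : ℝ) ≤ logStar (m : ℝ) + m + (D + 2) :=
    calc logStar (n : ℝ) ≤ m + 1 + logStar ((2 : ℝ) ^ t) := logStar_le_add_of_iterate_logb_le hiter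
      _ ≤ m + 1 + (logStar t + 1) := by gcongr; exact logStar_two_rpow_le t
      _ ≤ logStar (m : ℝ) + m + (D + 2) := by linarith [hD m]
  have hm : logStar (m : ℝ) ≤ m := logStar_natCast_le m
  constructor
  · exact_mod_cast hn
  · have hn' : (logStar (n : ℝ) : ℝ) ≤ logStar (m : ℝ) + m + (D + 2) := by exact_mod_cast hn
    have hm' : (logStar (m : ℝ) : ℝ) ≤ m := by exact_mod_cast hm
    linarith

theorem logstar_from_iterated_log_bound (c : ℝ) (hc : 0 < c) :
    ∃ C : ℝ, ∃ a : ℝ, 0 < a ∧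
      ∀ m n : ℕ, 1 ≤ m → 1 ≤ n →
        iterLog m (n : ℝ) ≤ (2 : ℝ) ^ (c * (m : ℝ) ^ 2 * Real.logb 2 m) →
        ((logStar n : ℝ) ≤ (logStar m : ℝ) + m + C ∧
          a * (logStar n : ℝ) - C ≤ (m : ℝ)) :=
  logstar_from_iterated_log_bound_general c
end

section
/- A class $\mathcal{H} \subseteq \{0,1\}^X$ has finite Littlestone dimension if and only if there is a finite bound on the number of thresholds it contains; i.e., $\mathrm{Ldim}(\mathcal{H}) = \infty$ iff for every $k$ there exist $x_1,\ldots,x_k \in X$ and $h_1,\ldots,h_k \in \mathcal{H}$ with $h_i(x_j) = 1$ iff $j \geq i$. -/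
/-- `H` shatters some complete mistake tree of depth `d`. -/
def LdimGe {X : Type*} (H : Set (X → Bool)) (d : ℕ) : Prop :=
  ∃ T : List Bool → X, ∀ l : List Bool, l.length = d →
    ∃ h ∈ H, ∀ k < d, h (T (l.take k)) = l.getD k false

/-- `H` contains `k` thresholds: `x₁,…,x_k` and `h₁,…,h_k ∈ H` with
`hᵢ(xⱼ) = 1` iff `j ≥ i`. -/
def ContainsThresholds {X : Type*} (H : Set (X → Bool)) (k : ℕ) : Prop :=
  ∃ (x : Fin k → X) (h : Fin k → X → Bool),
    (∀ i, h i ∈ H) ∧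
    ∀ i j : Fin k, h i (x j) = true ↔ (i : ℕ) ≤ (j : ℕ)

/-!
Call a tree shattered by `E` "in `S`" when all its inner nodes lie in `S`. Depth `d + 1` in `S`
means a root `r ∈ S` such that both `{g ∈ E | g r = c}` shatter trees of depth `d` in `S`. From
this recursion, a Ramsey argument on trees shows that if `S = A ∪ B` then depth `a + b` in `S`
gives depth `a` in `A` or depth `b` in `B`.

For thresholds from a tree, pick `f` in the `1`-branch of the root `r` and colour the nodes of
that branch by `f`. An `f`-zero subtree of depth `2 ^ (t + 1) - 2` contains `t` thresholds, and
appending `r` and `f` as the last point and hypothesis gives `t + 1`. An `f`-one subtree of depth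
`2 ^ (t + 1) - 1` has a root `z`, and its `0`-branch contains `t` thresholds; putting `z` and `f`
first gives `t + 1`. Conversely, `2 ^ d` thresholds give a tree by binary search: the root is
the middle point.
-/

section

variable {X : Type*}

def ShattersTreeIn (E : Set (X → Bool)) (S : Set X) (d : ℕ) : Prop :=
  ∃ T : List Bool → X, (∀ l : List Bool, l.length = d →
    ∃ h ∈ E, ∀ k < d, h (T (l.take k)) = l.getD k false) ∧
    ∀ l : List Bool, l.length < d → T l ∈ S

def ContainsThresholdsIn (E : Set (X → Bool)) (S : Set X) (k : ℕ) : Prop :=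
  ∃ (x : Fin k → X) (h : Fin k → X → Bool),
    (∀ i, h i ∈ E) ∧ (∀ i j : Fin k, h i (x j) = true ↔ (i : ℕ) ≤ (j : ℕ)) ∧
    ∀ j, x j ∈ S

theorem ldimGe_iff_shattersTreeIn_univ (H : Set (X → Bool)) (d : ℕ) :
    LdimGe H d ↔ ShattersTreeIn H Set.univ d := by
  simp [LdimGe, ShattersTreeIn]

theorem containsThresholds_iff_containsThresholdsIn_univ (H : Set (X → Bool)) (k : ℕ) :
    ContainsThresholds H k ↔ ContainsThresholdsIn H Set.univ k := by
  simp [ContainsThresholds, ContainsThresholdsIn]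

variable {E E' : Set (X → Bool)} {S S' A B : Set X} {d : ℕ}

theorem ShattersTreeIn.mono (hE : E ⊆ E') (hS : S ⊆ S') (h : ShattersTreeIn E S d) :
    ShattersTreeIn E' S' d := by
  obtain ⟨T, hT, hN⟩ := h
  exact ⟨T, fun l hl => (hT l hl).imp fun g ⟨hg, hgT⟩ => ⟨hE hg, hgT⟩,
    fun l hl => hS (hN l hl)⟩

theorem ShattersTreeIn.nonempty (h : ShattersTreeIn E S d) : E.Nonempty := by
  obtain ⟨T, hT, -⟩ := h
  obtain ⟨g, hg, -⟩ := hT (List.replicate d false) (by simp)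
  exact ⟨g, hg⟩

theorem shattersTreeIn_zero (y : X) (hE : E.Nonempty) : ShattersTreeIn E S 0 :=
  let ⟨g, hg⟩ := hE
  ⟨fun _ => y, fun _ _ => ⟨g, hg, by simp⟩, by simp⟩

theorem ShattersTreeIn.zero (h : ShattersTreeIn E S d) : ShattersTreeIn E S' 0 :=
  shattersTreeIn_zero (h.choose []) h.nonempty

theorem shattersTreeIn_succ_iff :
    ShattersTreeIn E S (d + 1) ↔ ∃ r ∈ S, ∀ c, ShattersTreeIn {g ∈ E | g r = c} S d := by
  constructor
  · rintro ⟨T, hT, hN⟩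
    refine ⟨T [], hN [] (by simp),
      fun c => ⟨fun l => T (c :: l), fun l hl => ?_, fun l hl => ?_⟩⟩
    · obtain ⟨g, hg, hgT⟩ := hT (c :: l) (by simp [hl])
      exact ⟨g, ⟨hg, by simpa using hgT 0 (by omega)⟩,
        fun k hk => by simpa using hgT (k + 1) (by omega)⟩
    · exact hN (c :: l) (by simp [hl])
  · rintro ⟨r, hr, hsub⟩
    choose T hT hN using hsub
    refine ⟨fun | [] => r | c :: l => T c l, ?_, ?_⟩
    · rintro (_ | ⟨c, l⟩) hl
      · simp at hl
      obtain ⟨g, ⟨hg, hgr⟩, hgT⟩ := hT c l (by simpa using hl)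
      refine ⟨g, hg, fun k hk => ?_⟩
      cases k with
      | zero => simpa using hgr
      | succ k => simpa using hgT k (by simp at hl; omega)
    · rintro (_ | ⟨c, l⟩) hl
      · exact hr
      · exact hN c l (by simp at hl; omega)

theorem ShattersTreeIn.of_union {a b : ℕ} (h : ShattersTreeIn E (A ∪ B) (a + b)) :
    ShattersTreeIn E A a ∨ ShattersTreeIn E B b := by
  induction a generalizing b E with
  | zero => exact Or.inl h.zero
  | succ a iha =>
    induction b generalizing E with
    | zero => exact Or.inr h.zero
    | succ b ihb =>
      rw [show a + 1 + (b + 1) = a + 1 + b + 1 by omega] at h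
      obtain ⟨r, hr, hsub⟩ := shattersTreeIn_succ_iff.mp h
      have hsub' : ∀ c, ShattersTreeIn {g ∈ E | g r = c} (A ∪ B) (a + (b + 1)) := by
        rwa [← Nat.succ_add_eq_add_succ]
      rcases hr with hrA | hrB
      · have hc : ∀ c, ShattersTreeIn {g ∈ E | g r = c} A a ∨ ShattersTreeIn E B (b + 1) :=
          fun c => (iha (hsub' c)).imp_right (·.mono (Set.sep_subset E _) le_rfl)
        rw [forall_or_right] at hc
        exact hc.imp_left fun hall => shattersTreeIn_succ_iff.mpr ⟨r, hrA, hall⟩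
      · have hc : ∀ c, ShattersTreeIn E A (a + 1) ∨ ShattersTreeIn {g ∈ E | g r = c} B b :=
          fun c => (ihb (hsub c)).imp_left (·.mono (Set.sep_subset E _) le_rfl)
        rw [forall_or_left] at hc
        exact hc.imp_right fun hall => shattersTreeIn_succ_iff.mpr ⟨r, hrB, hall⟩

variable {f : X → Bool} {r : X} {t : ℕ}

theorem ContainsThresholdsIn.mono (hE : E ⊆ E') (h : ContainsThresholdsIn E S t) :
    ContainsThresholdsIn E' S t :=
  let ⟨x, hs, hmem, hthr, hx⟩ := h
  ⟨x, hs, fun i => hE (hmem i), hthr, hx⟩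

theorem ContainsThresholdsIn.cons
    (h : ContainsThresholdsIn {g ∈ E | g r = false} {y ∈ S | f y = true} t)
    (hf : f ∈ E) (hfr : f r = true) (hr : r ∈ S) : ContainsThresholdsIn E S (t + 1) := by
  obtain ⟨x, hs, hmem, hthr, hx⟩ := h
  refine ⟨Fin.cons r x, Fin.cons f hs, fun i => ?_, fun i j => ?_, fun j => ?_⟩
  · cases i using Fin.cases with
    | zero => simpa using hf
    | succ i => simpa using (hmem i).1
  · cases i using Fin.cases with
    | zero => cases j using Fin.cases with
      | zero => simpa using hfr
      | succ j => simpa using (hx j).2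
    | succ i => cases j using Fin.cases with
      | zero => simpa using (hmem i).2
      | succ j => simpa using hthr i j
  · cases j using Fin.cases with
    | zero => simpa using hr
    | succ j => simpa using (hx j).1

theorem ContainsThresholdsIn.snoc
    (h : ContainsThresholdsIn {g ∈ E | g r = true} {y ∈ S | f y = false} t)
    (hf : f ∈ E) (hfr : f r = true) (hr : r ∈ S) : ContainsThresholdsIn E S (t + 1) := by
  obtain ⟨x, hs, hmem, hthr, hx⟩ := h
  refine ⟨Fin.snoc x r, Fin.snoc hs f, fun i => ?_, fun i j => ?_, fun j => ?_⟩
  · cases i using Fin.lastCases with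
    | last => simpa using hf
    | cast i => simpa using (hmem i).1
  · cases i using Fin.lastCases with
    | last => cases j using Fin.lastCases with
      | last => simpa using hfr
      | cast j => simp [(hx j).2]
    | cast i => cases j using Fin.lastCases with
      | last => simp [(hmem i).2]
      | cast j => simpa using hthr i j
  · cases j using Fin.lastCases with
    | last => simpa using hr
    | cast j => simpa using (hx j).1

theorem ShattersTreeIn.containsThresholdsIn (h : ShattersTreeIn E S (2 ^ (t + 1) - 2)) :
    ContainsThresholdsIn E S t := by
  induction t generalizing E S with
  | zero => exact ⟨Fin.elim0, Fin.elim0, fun i => i.elim0, fun i => i.elim0, fun j => j.elim0⟩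
  | succ t ih =>
    have h₁ : 2 ^ (t + 1) = 2 * 2 ^ t := pow_succ' 2 t
    have h₂ : 2 ^ (t + 1 + 1) = 4 * 2 ^ t := by ring
    have hpos : 1 ≤ 2 ^ t := Nat.one_le_two_pow
    rw [show 2 ^ (t + 1 + 1) - 2 = 2 ^ (t + 1) - 2 + (2 ^ (t + 1) - 1) + 1 by omega] at h
    obtain ⟨r, hr, hsub⟩ := shattersTreeIn_succ_iff.mp h
    obtain ⟨f, hf⟩ := (hsub true).nonempty
    have hS : S ⊆ {y ∈ S | f y = false} ∪ {y ∈ S | f y = true} := by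
      intro y hy
      cases hfy : f y <;> simp [hy, hfy]
    rcases ((hsub true).mono subset_rfl hS).of_union with hA | hB
    · exact (ih hA).snoc hf.1 hf.2 hr
    · rw [show 2 ^ (t + 1) - 1 = 2 ^ (t + 1) - 2 + 1 by omega] at hB
      obtain ⟨z, ⟨hzS, hfz⟩, hzsub⟩ := shattersTreeIn_succ_iff.mp hB
      exact ((ih (hzsub false)).cons hf hfz hzS).mono (Set.sep_subset E _)

theorem shattersTreeIn_image_Ico_of_thresholds {k a : ℕ} {x : Fin k → X}
    {h : Fin k → X → Bool} (hthr : ∀ i j, h i (x j) = true ↔ (i : ℕ) ≤ (j : ℕ))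
    (hx : ∀ j, x j ∈ S) (hak : a + 2 ^ d ≤ k) :
    ShattersTreeIn (h '' {i | (i : ℕ) ∈ Set.Ico a (a + 2 ^ d)}) S d := by
  induction d generalizing a with
  | zero =>
    let i₀ : Fin k := ⟨a, by simp at hak; omega⟩
    exact shattersTreeIn_zero (x i₀) ⟨h i₀, i₀, by simp [i₀], rfl⟩
  | succ d ih =>
    have hpow : 2 ^ (d + 1) = 2 ^ d + 2 ^ d := by ring
    have hpos : 1 ≤ 2 ^ d := Nat.one_le_two_pow
    let m : Fin k := ⟨a + 2 ^ d - 1, by omega⟩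
    refine shattersTreeIn_succ_iff.mpr ⟨x m, hx m, fun c => ?_⟩
    cases c
    · refine (ih (a := a + 2 ^ d) (by omega)).mono ?_ subset_rfl
      rintro _ ⟨i, ⟨hai, hia⟩, rfl⟩
      refine ⟨⟨i, ⟨by omega, by omega⟩, rfl⟩, ?_⟩
      rw [← Bool.not_eq_true, hthr]
      simp only [m]
      omega
    · refine (ih (a := a) (by omega)).mono ?_ subset_rfl
      rintro _ ⟨i, ⟨hai, hia⟩, rfl⟩
      exact ⟨⟨i, ⟨hai, by omega⟩, rfl⟩, (hthr i m).mpr (by simp only [m]; omega)⟩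

theorem ContainsThresholdsIn.shattersTreeIn (h : ContainsThresholdsIn E S (2 ^ d)) :
    ShattersTreeIn E S d := by
  obtain ⟨x, hs, hmem, hthr, hx⟩ := h
  refine (shattersTreeIn_image_Ico_of_thresholds (a := 0) hthr hx (by simp)).mono ?_ le_rfl
  rintro _ ⟨i, -, rfl⟩
  exact hmem i

end

/-- Infinite Littlestone dimension iff `H` contains arbitrarily many thresholds. -/
theorem ldim_infinite_iff_unbounded_thresholds {X : Type*} (H : Set (X → Bool)) :
    (∀ d : ℕ, LdimGe H d) ↔ (∀ k : ℕ, ContainsThresholds H k) := by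
  simp only [ldimGe_iff_shattersTreeIn_univ, containsThresholds_iff_containsThresholdsIn_univ]
  exact ⟨fun hd k => (hd _).containsThresholdsIn, fun hk d => (hk _).shattersTreeIn⟩
end

section
/- Let $X = \{1,\ldots,k\}$ be $m$-homogeneous with respect to a $(0.1,\delta)$-differentially private algorithm $A$ with $\delta \leq \frac{1}{10^3 m^2 \log m}$, and suppose $A$ is a $(1/16,1/16)$-accurate empirical learner for thresholds over $X$. Let $(p_i)_{i=0}^m$ be the probabilities-list and let $i$ be an index with $p_i - p_{i-1} \geq \frac{1}{4m}$. Then, setting $n = k - m$, there exists a family $\mathcal{P} = \{P_1,\ldots,P_n\}$ of distributions over $\{\pm1\}^n$ such that every pair $P_i,P_j$ is $(0.1,\delta)$-indistinguishable, and there is $r \in [0,1]$ with $\Pr_{v\sim P_i}[v(j)=1] \leq r - \frac{1}{10m}$ for $j<i$ and $\geq r + \frac{1}{10m}$ for $j>i$. -/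
noncomputable def massProb {α : Type*} (p : α → ℝ) (E : Set α) : ℝ :=
  ∑' a, Set.indicator E p a

def IsProbMass {α : Type*} (p : α → ℝ) : Prop :=
  (∀ a, 0 ≤ p a) ∧ HasSum p 1

def Indist {α : Type*} (p q : α → ℝ) (ε δ : ℝ) : Prop :=
  ∀ E : Set α,
    massProb p E ≤ Real.exp ε * massProb q E + δ ∧
    massProb q E ≤ Real.exp ε * massProb p E + δ

/-- The threshold function `x ↦ 1[x ≥ t]` on `X = {1, …, k}` (as `Fin k`,
`x ↦ x + 1`). -/
def thr {k : ℕ} (t : ℕ) (x : Fin k) : Bool := decide (t ≤ (x : ℕ) + 1)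

/-- The balanced increasing realizable sample determined by a strictly
increasing tuple of points: the first half labeled `-1` (false), the second
half `+1` (true). -/
def balSample {k m : ℕ} (x : Fin m → Fin k) : Fin m → Fin k × Bool :=
  fun i => (x i, decide (m / 2 ≤ (i : ℕ)))

/-- `A_S(y) = Pr_{h ∼ A(S)}[h(y) = 1]`. -/
noncomputable def AS {k m : ℕ}
    (A : (Fin m → Fin k × Bool) → (Fin k → Bool) → ℝ)
    (S : Fin m → Fin k × Bool) (y : Fin k) : ℝ :=
  massProb (A S) {h | h y = true}

/-- `ord_S(y) = |{i : xᵢ ≤ y}|`. -/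
def ordS {k m : ℕ} (x : Fin m → Fin k) (y : Fin k) : ℕ :=
  (Finset.univ.filter fun i => x i ≤ y).card

/-!
Let `c = i₀ - 1` and `n = k - m`. Fix a balanced increasing sample whose `c`-th gap consists of
`n` free points and let its `c`-th point slide across that gap: for position `t` the family
member `P t` is the law of the output hypothesis of `A` restricted to the gap. Any two positions
give samples differing in one example only, and privacy survives the restriction. By
homogeneity the marginal of `P t` at gap point `j` is within `1/(100m)` of `p c` if `j < t` and of
`p (c + 1)` if `t < j`, so the gap `p (c + 1) - p c ≥ 1/(4m)` separates the two kinds of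
marginals by `1/(10m)` on either side of the midpoint.
-/

open Finset

section PushForward

variable {α β : Type*} [Fintype α]

lemma massProb_eq_sum (p : α → ℝ) (E : Set α) : massProb p E = ∑ a, E.indicator p a :=
  tsum_fintype _

def pushMass [DecidableEq β] (f : α → β) (p : α → ℝ) (b : β) : ℝ :=
  ∑ a with f a = b, p a

variable [Fintype β] [DecidableEq β]

lemma massProb_pushMass (f : α → β) (p : α → ℝ) (E : Set β) :
    massProb (pushMass f p) E = massProb p (f ⁻¹' E) := by
  rw [massProb_eq_sum, massProb_eq_sum, ← sum_fiberwise univ f]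
  refine sum_congr rfl fun b _ => ?_
  by_cases hb : b ∈ E
  · rw [Set.indicator_of_mem hb]
    refine sum_congr rfl fun a ha => (Set.indicator_of_mem ?_ _).symm
    simpa [(mem_filter.mp ha).2] using hb
  · rw [Set.indicator_of_notMem hb]
    refine (sum_eq_zero fun a ha => Set.indicator_of_notMem ?_ _).symm
    simpa [(mem_filter.mp ha).2] using hb

lemma IsProbMass.pushMass {p : α → ℝ} (hp : IsProbMass p) (f : α → β) :
    IsProbMass (pushMass f p) := by
  refine ⟨fun b => sum_nonneg fun a _ => hp.1 a, ?_⟩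
  rw [← (hasSum_fintype p).unique hp.2, ← sum_fiberwise univ f p]
  exact hasSum_fintype _

lemma Indist.pushMass {p q : α → ℝ} {ε δ : ℝ} (h : Indist p q ε δ) (f : α → β) :
    Indist (pushMass f p) (pushMass f q) ε δ := by
  intro E
  simpa only [massProb_pushMass] using h (f ⁻¹' E)

end PushForward

section SlidingSample

variable {k m : ℕ}

/-- With `n = k - m`: the points `0, …, c - 1`, then `c + t`, then `n + c + 1, …, n + m - 1`.
Only the `c`-th point depends on `t`; it ranges over the gap points `c, …, c + n - 1`. -/
def slidingSample (c : Fin m) (t : Fin (k - m)) : Fin m → Fin k := fun i =>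
  ⟨if (i : ℕ) < c then i else if i = c then c + t else k - m + i, by
    have := i.isLt; have := t.isLt; split_ifs <;> omega⟩

def gapPoint (c : Fin m) (j : Fin (k - m)) : Fin k :=
  ⟨c + j, by have := c.isLt; have := j.isLt; omega⟩

variable (c : Fin m) (t : Fin (k - m))

lemma slidingSample_strictMono : StrictMono (slidingSample c t) := by
  intro i i' h
  have := i'.isLt; have := t.isLt
  simp only [slidingSample, Fin.lt_def, Fin.ext_iff] at h ⊢
  split_ifs <;> omega

lemma slidingSample_ne_gapPoint {j : Fin (k - m)} (hj : j ≠ t) (i : Fin m) :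
    slidingSample c t i ≠ gapPoint c j := by
  have := j.isLt
  simp only [slidingSample, gapPoint, ne_eq, Fin.ext_iff] at hj ⊢
  split_ifs <;> omega

lemma slidingSample_apply_of_ne (t' : Fin (k - m)) {i : Fin m} (hi : i ≠ c) :
    slidingSample c t i = slidingSample c t' i := by
  simp [slidingSample, hi]

lemma ordS_slidingSample_gapPoint (j : Fin (k - m)) :
    ordS (slidingSample c t) (gapPoint c j) = if t ≤ j then (c : ℕ) + 1 else c := by
  have hlt : ∀ i : Fin m, slidingSample c t i ≤ gapPoint c j ↔
      (i : ℕ) < if t ≤ j then (c : ℕ) + 1 else c := by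
    intro i
    have := j.isLt
    simp only [slidingSample, gapPoint, Fin.le_def, Fin.ext_iff]
    split_ifs <;> omega
  simp only [ordS, hlt, Fin.card_filter_val_lt]
  have := c.isLt
  split_ifs <;> omega

end SlidingSample

lemma le_midpoint_sub_of_abs_sub_le {m : ℕ} {a p q : ℝ} (hgap : 1 / (4 * m) ≤ q - p)
    (ha : |a - p| ≤ 1 / (100 * m)) : a ≤ (p + q) / 2 - 1 / (10 * m) := by
  rw [show (1 : ℝ) / (4 * m) = 1 / m / 4 by ring] at hgap
  rw [show (1 : ℝ) / (100 * m) = 1 / m / 100 by ring] at ha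
  rw [show (1 : ℝ) / (10 * m) = 1 / m / 10 by ring]
  have : (0 : ℝ) ≤ 1 / m := by positivity
  linarith [(abs_le.mp ha).2]

lemma midpoint_add_le_of_abs_sub_le {m : ℕ} {a p q : ℝ} (hgap : 1 / (4 * m) ≤ q - p)
    (ha : |a - q| ≤ 1 / (100 * m)) : (p + q) / 2 + 1 / (10 * m) ≤ a := by
  have := le_midpoint_sub_of_abs_sub_le (a := -a) (p := -q) (q := -p) (by rwa [neg_sub_neg])
    (by rwa [neg_sub_neg, abs_sub_comm])
  linarith

theorem homogeneous_to_family_general (k m : ℕ) (δ : ℝ)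
    (A : (Fin m → Fin k × Bool) → (Fin k → Bool) → ℝ)
    (hmass : ∀ S, IsProbMass (A S))
    -- `(0.1, δ)`-differential privacy:
    (hpriv : ∀ S S' : Fin m → Fin k × Bool,
      (∃ i₀, ∀ i, i ≠ i₀ → S i = S' i) → Indist (A S) (A S') 0.1 δ)
    -- `{1,…,k}` is `m`-homogeneous with probabilities-list `p`:
    (p : ℕ → ℝ) (hp : ∀ i ≤ m, p i ∈ Set.Icc (0 : ℝ) 1)
    (hhom : ∀ x : Fin m → Fin k, StrictMono x →
      ∀ y : Fin k, (∀ i, x i ≠ y) →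
        |AS A (balSample x) y - p (ordS x y)| ≤ 1 / (100 * m))
    -- the gap index:
    (i₀ : ℕ) (hi₀ : 1 ≤ i₀ ∧ i₀ ≤ m)
    (hgap : 1 / (4 * m) ≤ p i₀ - p (i₀ - 1)) :
    ∃ P : Fin (k - m) → (Fin (k - m) → Bool) → ℝ,
      (∀ i, IsProbMass (P i)) ∧
      (∀ i j, Indist (P i) (P j) 0.1 δ) ∧
      ∃ r ∈ Set.Icc (0 : ℝ) 1, ∀ i j : Fin (k - m),
        ((j : ℕ) < (i : ℕ) →
          massProb (P i) {v | v j = true} ≤ r - 1 / (10 * m)) ∧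
        ((i : ℕ) < (j : ℕ) →
          r + 1 / (10 * m) ≤ massProb (P i) {v | v j = true}) := by
  obtain ⟨hi₀_pos, hi₀_le⟩ := hi₀
  let c : Fin m := ⟨i₀ - 1, by omega⟩
  let S (t : Fin (k - m)) := balSample (slidingSample c t)
  have hmarg t j (hjt : j ≠ t) :
      |AS A (S t) (gapPoint c j) - p (if t ≤ j then i₀ else i₀ - 1)| ≤ 1 / (100 * m) := by
    have h := hhom _ (slidingSample_strictMono c t) _ (slidingSample_ne_gapPoint c t hjt)
    rwa [ordS_slidingSample_gapPoint, show (c : ℕ) = i₀ - 1 from rfl,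
      Nat.sub_add_cancel hi₀_pos] at h
  have hp₀ := hp (i₀ - 1) (by omega)
  have hp₁ := hp i₀ hi₀_le
  refine ⟨fun t => pushMass (fun h j => h (gapPoint c j)) (A (S t)),
    fun t => (hmass _).pushMass _, fun t t' => ?_, (p (i₀ - 1) + p i₀) / 2,
    ⟨by linarith [hp₀.1, hp₁.1], by linarith [hp₀.2, hp₁.2]⟩,
    fun t j => ⟨fun hjt => ?_, fun htj => ?_⟩⟩
  · refine (hpriv _ _ ⟨c, fun i hi => ?_⟩).pushMass _
    simp only [S, balSample, slidingSample_apply_of_ne c t t' hi]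
  · have := hmarg t j (by omega)
    rw [if_neg (by omega)] at this
    rw [massProb_pushMass]
    exact le_midpoint_sub_of_abs_sub_le hgap this
  · have := hmarg t j (by omega)
    rw [if_pos (by omega)] at this
    rw [massProb_pushMass]
    exact midpoint_add_le_of_abs_sub_le hgap this

/-- Construction of the family `𝒫` of pairwise-indistinguishable distributions
over `{±1}ⁿ` (with `n = k - m`) from a private empirical learner for thresholds
over an `m`-homogeneous domain `{1,…,k}` whose probabilities-list has a gap of
`1/(4m)` at index `i₀`. -/
theorem homogeneous_to_family (k m : ℕ) (hm : 1 ≤ m) (hme : Even m)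
    (hkm : m < k) (δ : ℝ) (hδ0 : 0 ≤ δ)
    (hδ : δ ≤ 1 / (10 ^ 3 * (m : ℝ) ^ 2 * Real.logb 2 m))
    (A : (Fin m → Fin k × Bool) → (Fin k → Bool) → ℝ)
    (hmass : ∀ S, IsProbMass (A S))
    -- `(0.1, δ)`-differential privacy:
    (hpriv : ∀ S S' : Fin m → Fin k × Bool,
      (∃ i₀, ∀ i, i ≠ i₀ → S i = S' i) → Indist (A S) (A S') 0.1 δ)
    -- `(1/16,1/16)`-accurate empirical learner for thresholds:
    (hacc : ∀ t : ℕ, ∀ x : Fin m → Fin k,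
      15 / 16 ≤ massProb (A fun i => (x i, thr t (x i)))
        {f | ((Finset.univ.filter fun i => f (x i) ≠ thr t (x i)).card : ℝ)
              / m ≤ 1 / 16})
    -- `{1,…,k}` is `m`-homogeneous with probabilities-list `p`:
    (p : ℕ → ℝ) (hp : ∀ i ≤ m, p i ∈ Set.Icc (0 : ℝ) 1)
    (hhom : ∀ x : Fin m → Fin k, StrictMono x →
      ∀ y : Fin k, (∀ i, x i ≠ y) →
        |AS A (balSample x) y - p (ordS x y)| ≤ 1 / (100 * m))
    -- the gap index:
    (i₀ : ℕ) (hi₀ : 1 ≤ i₀ ∧ i₀ ≤ m)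
    (hgap : 1 / (4 * m) ≤ p i₀ - p (i₀ - 1)) :
    ∃ P : Fin (k - m) → (Fin (k - m) → Bool) → ℝ,
      (∀ i, IsProbMass (P i)) ∧
      (∀ i j, Indist (P i) (P j) 0.1 δ) ∧
      ∃ r ∈ Set.Icc (0 : ℝ) 1, ∀ i j : Fin (k - m),
        ((j : ℕ) < (i : ℕ) →
          massProb (P i) {v | v j = true} ≤ r - 1 / (10 * m)) ∧
        ((i : ℕ) < (j : ℕ) →
          r + 1 / (10 * m) ≤ massProb (P i) {v | v j = true}) :=
  homogeneous_to_family_general k m δ A hmass hpriv p hp hhom i₀ hi₀ hgap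
end
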